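/- For all m, k ∈ R^× and all n, l ∈ R, the projections U^n E_m U^{-n} and U^l E_k U^{-l} commute; moreover, if k = m and n + (m) ≠ l + (m), then (U^n E_m U^{-n})·(U^l E_m U^{-l}) = 0. -/

import Mathlib

/-! Operators on `ℓ²(R)` associated with an integral domain `R`. -/

noncomputable section

open scoped Classical in
/-- The Hilbert space `ℓ²(R)`. -/
abbrev H (R : Type*) : Type _ := lp (fun _ : R => ℂ) 2

open scoped Classical in
/-- The standard orthonormal basis vector `ξ_r` of `ℓ²(R)`. -/
def xi {R : Type*} (r : R) : H R := lp.single 2 r 1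

end
set_option synthInstance.maxHeartbeats 1000000
set_option maxHeartbeats 1000000
set_option linter.unusedVariables false

section Aux

variable {R : Type*}

noncomputable def stdBasis (R : Type*) : HilbertBasis R ℂ (H R) :=
  HilbertBasis.ofRepr (LinearIsometryEquiv.refl ℂ _)

lemma stdBasis_apply (r : R) : stdBasis R r = xi r := by
  classical
  show (stdBasis R).repr.symm (lp.single 2 r 1) = xi r
  unfold xi
  convert rfl
  rfl

open scoped Classical in
lemma xi_apply (r s : R) : (xi r : H R) s = if r = s then 1 else 0 := by
  unfold xi
  by_cases h : r = s
  · subst h; rw [lp.single_apply_self, if_pos rfl]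
  · rw [lp.single_apply_ne _ _ _ (Ne.symm h), if_neg h]

lemma inner_xi_left (a : R) (f : H R) : @inner ℂ _ _ (xi a) f = f a := by
  classical
  unfold xi
  rw [lp.inner_single_left]
  simp

open scoped Classical in
lemma inner_xi_xi (a c : R) : @inner ℂ _ _ (xi a) (xi c : H R) = if c = a then 1 else 0 := by
  rw [inner_xi_left, xi_apply]

lemma eq_of_inner_xi {v w : H R} (h : ∀ s : R, @inner ℂ _ _ (xi s) v = @inner ℂ _ _ (xi s) w) :
    v = w := by
  apply (stdBasis R).repr.injective
  ext s
  rw [(stdBasis R).repr_apply_apply, (stdBasis R).repr_apply_apply, stdBasis_apply]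
  exact h s

lemma ext_xi {T T' : H R →L[ℂ] H R} (h : ∀ r : R, T (xi r) = T' (xi r)) : T = T' := by
  refine ContinuousLinearMap.ext_on (s := Set.range (xi : R → H R)) ?_ ?_
  · have := (stdBasis R).dense_span
    rw [← Submodule.dense_iff_topologicalClosure_eq_top] at this
    have h2 : Set.range (fun i => stdBasis R i) = Set.range (xi : R → H R) := by
      simp only [stdBasis_apply]
    rw [← h2]
    exact this
  · rintro x ⟨r, rfl⟩
    exact h r

end Aux

/-- the projections `U^n E_m U^{-n}` and `U^l E_k U^{-l}` commute; if
moreover `k = m` and `n + (m) ≠ l + (m)`, their product is `0`. Here `E_m = S_m S_m^*`. -/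
theorem range_projections_commute_and_orthogonal (R : Type*) [CommRing R] [IsDomain R]
    (hnf : ¬ IsField R)
    (hfin : ∀ m : R, m ≠ 0 → Finite (R ⧸ Ideal.span {m}))
    (S U : R → H R →L[ℂ] H R)
    (hS : ∀ (m : R), m ≠ 0 → ∀ r : R, S m (xi r) = xi (m * r))
    (hU : ∀ n r : R, U n (xi r) = xi (n + r))
    (m k : R) (hm : m ≠ 0) (hk : k ≠ 0) (n l : R) :
    (U n * (S m * ContinuousLinearMap.adjoint (S m)) * U (-n)) *
        (U l * (S k * ContinuousLinearMap.adjoint (S k)) * U (-l)) =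
      (U l * (S k * ContinuousLinearMap.adjoint (S k)) * U (-l)) *
        (U n * (S m * ContinuousLinearMap.adjoint (S m)) * U (-n)) ∧
    (k = m → n - l ∉ Ideal.span {m} →
      (U n * (S m * ContinuousLinearMap.adjoint (S m)) * U (-n)) *
        (U l * (S m * ContinuousLinearMap.adjoint (S m)) * U (-l)) = 0) := by
  classical
  -- adjoint on basis vectors
  have hstar_dvd : ∀ (p : R), p ≠ 0 → ∀ c : R,
      ContinuousLinearMap.adjoint (S p) (xi (p * c)) = (xi c : H R) := by
    intro p hp c
    apply eq_of_inner_xi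
    intro s
    rw [ContinuousLinearMap.adjoint_inner_right, hS p hp, inner_xi_xi, inner_xi_xi]
    by_cases h : c = s
    · subst h; rw [if_pos rfl, if_pos rfl]
    · rw [if_neg h, if_neg (fun hc => h (mul_left_cancel₀ hp hc))]
  have hstar_ndvd : ∀ (p : R), p ≠ 0 → ∀ r : R, ¬ p ∣ r →
      ContinuousLinearMap.adjoint (S p) (xi r) = (0 : H R) := by
    intro p hp r hpr
    apply eq_of_inner_xi
    intro s
    rw [ContinuousLinearMap.adjoint_inner_right, hS p hp, inner_xi_xi, inner_zero_right]
    rw [if_neg (fun hc : r = p * s => hpr (hc ▸ ⟨s, rfl⟩))]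
  -- E_p on basis vectors
  have hE : ∀ (p : R), p ≠ 0 → ∀ r : R,
      (S p * ContinuousLinearMap.adjoint (S p)) (xi r) = if p ∣ r then (xi r : H R) else 0 := by
    intro p hp r
    rw [ContinuousLinearMap.mul_apply]
    by_cases h : p ∣ r
    · obtain ⟨c, rfl⟩ := h
      rw [hstar_dvd p hp c, hS p hp, if_pos ⟨c, rfl⟩]
    · rw [hstar_ndvd p hp r h, map_zero, if_neg h]
  -- conjugated projections on basis vectors
  have hP : ∀ (p : R), p ≠ 0 → ∀ (a r : R),
      (U a * (S p * ContinuousLinearMap.adjoint (S p)) * U (-a)) (xi r) =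
        if p ∣ (r - a) then (xi r : H R) else 0 := by
    intro p hp a r
    rw [ContinuousLinearMap.mul_apply, ContinuousLinearMap.mul_apply, hU, hE p hp]
    have key : -a + r = r - a := by ring
    rw [key]
    by_cases h : p ∣ (r - a)
    · rw [if_pos h, if_pos h, hU]
      congr 1
      ring
    · rw [if_neg h, if_neg h, map_zero]
  have hboth : ∀ (p : R), p ≠ 0 → ∀ (q : R), q ≠ 0 → ∀ (a b r : R),
      ((U a * (S p * ContinuousLinearMap.adjoint (S p)) * U (-a)) *
        (U b * (S q * ContinuousLinearMap.adjoint (S q)) * U (-b))) (xi r) =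
        if p ∣ (r - a) ∧ q ∣ (r - b) then (xi r : H R) else 0 := by
    intro p hp q hq a b r
    rw [ContinuousLinearMap.mul_apply, hP q hq b r]
    by_cases h2 : q ∣ (r - b)
    · rw [if_pos h2, hP p hp a r]
      by_cases h1 : p ∣ (r - a)
      · rw [if_pos h1, if_pos ⟨h1, h2⟩]
      · rw [if_neg h1, if_neg (fun h => h1 h.1)]
    · rw [if_neg h2, map_zero, if_neg (fun h => h2 h.2)]
  constructor
  · apply ext_xi
    intro r
    rw [hboth m hm k hk n l r, hboth k hk m hm l n r]
    exact if_congr and_comm rfl rfl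
  · intro hkm hnl
    have hndvd : ¬ m ∣ (n - l) := fun h => hnl (Ideal.mem_span_singleton.mpr h)
    apply ext_xi
    intro r
    rw [hboth m hm m hm n l r]
    have h1 : ¬ (m ∣ r - n ∧ m ∣ r - l) := by
      rintro ⟨h1, h2⟩
      apply hndvd
      have : n - l = (r - l) - (r - n) := by ring
      rw [this]
      exact dvd_sub h2 h1
    rw [if_neg h1]
    simp
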